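/- arXiv:1809.04431 — 5 statements merged into one kernel-verified Lean document; each statement's English description precedes it below -/
import Mathlib

section
/- For a positive integer $m$ and natural numbers $j,k$ with $j+k \ge m$, the integral $4\int_0^{\infty}\int_0^{\infty} \frac{e^{-m(\rho_1^2+\rho_2^2)}}{(\rho_1^2+\rho_2^2)^{m+1}}(1+\rho_1^2+\rho_2^2)\,\rho_1^{2j+1}\rho_2^{2k+1}\,d\rho_1\,d\rho_2 = \frac{j!\,k!}{(j+k)!}\cdot\frac{(j+k-m)!}{m^{j+k-m+2}}$. -/
/-!
Substituting `u = ρ₁²`, `t = ρ₂²` turns the integral into `∫∫ w(u + t) uʲ tᵏ du dt` over the open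
quadrant, where `w(s) = e^{-ms} (1 + s) / s^{m+1}` is the radial density of the Simanca metric.
Slicing the quadrant along the lines `u + t = s` (Tonelli, as everything is nonnegative) gives
`∫ w(s) (∫₀ˢ uʲ (s - u)ᵏ du) ds = B(j+1, k+1) ∫ w(s) s^{j+k+1} ds`, and the remaining radial
integral is a sum of two Gamma integrals, finite because `j + k ≥ m`.
-/

open Real MeasureTheory Set Function
open scoped ENNReal Nat

theorem integral_pow_mul_one_sub_pow (j k : ℕ) :
    ∫ x in (0:ℝ)..1, x ^ j * (1 - x) ^ k = (j ! * k ! / (j + k + 1)! : ℝ) := by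
  have h := Complex.betaIntegral_eq_Gamma_mul_div (j + 1) (k + 1)
    (by simp; positivity) (by simp; positivity)
  rw [show (j + 1 + (k + 1) : ℂ) = ↑(j + k + 1) + 1 by push_cast; ring,
    Complex.Gamma_nat_eq_factorial, Complex.Gamma_nat_eq_factorial,
    Complex.Gamma_nat_eq_factorial, Complex.betaIntegral] at h
  simp only [add_sub_cancel_right, Complex.cpow_natCast] at h
  apply Complex.ofReal_injective
  rw [← intervalIntegral.integral_ofReal]
  push_cast
  exact h

theorem integral_pow_mul_sub_pow (j k : ℕ) (s : ℝ) :
    ∫ u in (0:ℝ)..s, u ^ j * (s - u) ^ k = (j ! * k ! / (j + k + 1)! : ℝ) * s ^ (j + k + 1) := by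
  rcases eq_or_ne s 0 with rfl | hs
  · simp
  have hscale := intervalIntegral.integral_comp_mul_left (fun u => u ^ j * (s - u) ^ k) hs
    (a := 0) (b := 1)
  have hbeta : ∫ x in (0:ℝ)..1, (s * x) ^ j * (s - s * x) ^ k
      = s ^ (j + k) * (j ! * k ! / (j + k + 1)! : ℝ) := by
    rw [← integral_pow_mul_one_sub_pow, ← intervalIntegral.integral_const_mul]
    congr 1 with x
    rw [← mul_one_sub, mul_pow, mul_pow]
    ring
  simp only [mul_zero, mul_one, smul_eq_mul, hbeta] at hscale
  rw [eq_inv_mul_iff_mul_eq₀ hs] at hscale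
  rw [← hscale]
  ring

theorem setLIntegral_Ioi_comp_const_add (F : ℝ → ℝ≥0∞) (u : ℝ) :
    ∫⁻ t in Ioi 0, F (u + t) = ∫⁻ s in Ioi u, F s := by
  rw [(measurePreserving_add_left volume u).setLIntegral_comp_emb (measurableEmbedding_addLeft u),
    image_const_add_Ioi, add_zero]

theorem lintegral_Ioi_Ioi_comp_add_eq_lintegral_Ioo {F : ℝ → ℝ → ℝ≥0∞}
    (hF : Measurable (uncurry F)) :
    ∫⁻ u in Ioi 0, ∫⁻ t in Ioi 0, F u (u + t) = ∫⁻ s in Ioi 0, ∫⁻ u in Ioo 0 s, F u s := by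
  set T : Set (ℝ × ℝ) := {p | 0 < p.1 ∧ p.1 < p.2}
  have hT : MeasurableSet T :=
    (measurableSet_lt measurable_const measurable_fst).inter
      (measurableSet_lt measurable_fst measurable_snd)
  have hrows : ∀ u, (Ioi 0).indicator (fun u => ∫⁻ s in Ioi u, F u s) u
      = ∫⁻ s, T.indicator (uncurry F) (u, s) := by
    intro u
    by_cases hu : 0 < u
    · rw [indicator_of_mem (mem_Ioi.2 hu), ← lintegral_indicator measurableSet_Ioi]
      simp [indicator, T, hu]
    · simp [indicator, T, hu]
  have hcols : ∀ s, (Ioi 0).indicator (fun s => ∫⁻ u in Ioo 0 s, F u s) s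
      = ∫⁻ u, T.indicator (uncurry F) (u, s) := by
    intro s
    by_cases hs : 0 < s
    · rw [indicator_of_mem (mem_Ioi.2 hs), ← lintegral_indicator measurableSet_Ioo]
      rfl
    · have : ∀ u, ¬ (0 < u ∧ u < s) := fun u hu => hs (hu.1.trans hu.2)
      simp [indicator, T, hs, this]
  simp_rw [setLIntegral_Ioi_comp_const_add]
  rw [← lintegral_indicator measurableSet_Ioi, ← lintegral_indicator measurableSet_Ioi]
  simp_rw [hrows, hcols]
  exact lintegral_lintegral_swap (hF.indicator hT).aemeasurable

theorem lintegral_Ioi_Ioi_add_mul_pow {G : ℝ → ℝ≥0∞} (hG : Measurable G) (j k : ℕ) :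
    ∫⁻ u in Ioi 0, ∫⁻ t in Ioi 0, G (u + t) * ENNReal.ofReal (u ^ j * t ^ k)
      = ∫⁻ s in Ioi 0, G s * ENNReal.ofReal ((j ! * k ! / (j + k + 1)! : ℝ) * s ^ (j + k + 1)) := by
  have h := lintegral_Ioi_Ioi_comp_add_eq_lintegral_Ioo
    (F := fun u s => G s * ENNReal.ofReal (u ^ j * (s - u) ^ k)) (by fun_prop)
  simp only [add_sub_cancel_left] at h
  rw [h]
  refine setLIntegral_congr_fun measurableSet_Ioi fun s hs => ?_
  rw [lintegral_const_mul _ (by fun_prop), ← ofReal_integral_eq_lintegral_ofReal,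
    ← integral_Ioc_eq_integral_Ioo, ← intervalIntegral.integral_of_le (le_of_lt hs),
    integral_pow_mul_sub_pow]
  · exact (Continuous.integrableOn_Icc (by fun_prop)).mono_set Ioo_subset_Icc_self
  · filter_upwards [self_mem_ae_restrict measurableSet_Ioo] with u hu
    exact mul_nonneg (pow_nonneg hu.1.le _) (pow_nonneg (sub_nonneg.2 hu.2.le) _)

/-- The inner integrals are taken as lower Lebesgue integrals, so that Tonelli applies; they are
finite for almost every `u` because the total integral is. -/
theorem integral_Ioi_Ioi_add_mul_pow {g : ℝ → ℝ} (hg : Measurable g)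
    (hg_nonneg : ∀ s, 0 < s → 0 ≤ g s) (j k : ℕ)
    (hg_int : IntegrableOn (fun s => g s * s ^ (j + k + 1)) (Ioi 0)) :
    ∫ u in Ioi 0, ∫ t in Ioi 0, g (u + t) * u ^ j * t ^ k
      = (j ! * k ! / (j + k + 1)! : ℝ) * ∫ s in Ioi 0, g s * s ^ (j + k + 1) := by
  set B : ℝ := j ! * k ! / (j + k + 1)!
  have hB : 0 ≤ B := by positivity
  set I : ℝ → ℝ≥0∞ := fun u =>
    ∫⁻ t in Ioi 0, ENNReal.ofReal (g (u + t)) * ENNReal.ofReal (u ^ j * t ^ k)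
  have hI : Measurable I := Measurable.lintegral_prod_right (by fun_prop)
  have hinner : ∀ u ∈ Ioi (0 : ℝ), ∫ t in Ioi 0, g (u + t) * u ^ j * t ^ k = (I u).toReal := by
    intro u hu
    rw [integral_eq_lintegral_of_nonneg_ae _ (by fun_prop)]
    · congr 1
      refine setLIntegral_congr_fun measurableSet_Ioi fun t ht => ?_
      rw [← ENNReal.ofReal_mul (hg_nonneg _ (add_pos hu ht)), mul_assoc]
    · filter_upwards [self_mem_ae_restrict measurableSet_Ioi] with t ht
      exact mul_nonneg (mul_nonneg (hg_nonneg _ (add_pos hu ht)) (pow_nonneg (le_of_lt hu) _))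
        (pow_nonneg (le_of_lt ht) _)
  have hradial_nonneg : ∀ s ∈ Ioi (0 : ℝ), 0 ≤ g s * s ^ (j + k + 1) :=
    fun s hs => mul_nonneg (hg_nonneg s hs) (pow_nonneg (le_of_lt hs) _)
  have hI_total : ∫⁻ u in Ioi 0, I u = ENNReal.ofReal (B * ∫ s in Ioi 0, g s * s ^ (j + k + 1)) := by
    rw [lintegral_Ioi_Ioi_add_mul_pow hg.ennreal_ofReal, ← integral_const_mul,
      ofReal_integral_eq_lintegral_ofReal (hg_int.const_mul B)]
    · refine setLIntegral_congr_fun measurableSet_Ioi fun s hs => ?_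
      rw [← ENNReal.ofReal_mul (hg_nonneg s hs)]
      congr 1
      ring
    · filter_upwards [self_mem_ae_restrict measurableSet_Ioi] with s hs
      exact mul_nonneg hB (hradial_nonneg s hs)
  calc ∫ u in Ioi 0, ∫ t in Ioi 0, g (u + t) * u ^ j * t ^ k
      = ∫ u in Ioi 0, (I u).toReal := setIntegral_congr_fun measurableSet_Ioi hinner
    _ = (∫⁻ u in Ioi 0, I u).toReal :=
        integral_toReal hI.aemeasurable (ae_lt_top hI (hI_total ▸ ENNReal.ofReal_ne_top))
    _ = B * ∫ s in Ioi 0, g s * s ^ (j + k + 1) := by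
        rw [hI_total, ENNReal.toReal_ofReal]
        exact mul_nonneg hB (setIntegral_nonneg measurableSet_Ioi hradial_nonneg)

theorem integral_Ioi_comp_sq_mul_pow (f : ℝ → ℝ) (a : ℕ) :
    ∫ x in Ioi 0, f (x ^ 2) * x ^ (2 * a + 1) = 2⁻¹ * ∫ t in Ioi 0, f t * t ^ a := by
  rw [← integral_const_mul, ← integral_comp_rpow_Ioi (fun t => 2⁻¹ * (f t * t ^ a)) two_ne_zero]
  refine setIntegral_congr_fun measurableSet_Ioi fun x _ => ?_
  simp only [smul_eq_mul, abs_two, Real.rpow_ofNat, show (2 : ℝ) - 1 = 1 by norm_num,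
    Real.rpow_one]
  ring

theorem integral_Ioi_Ioi_comp_sq (G : ℝ → ℝ → ℝ) (j k : ℕ) :
    ∫ x in Ioi 0, ∫ y in Ioi 0, G (x ^ 2) (y ^ 2) * x ^ (2 * j + 1) * y ^ (2 * k + 1)
      = 4⁻¹ * ∫ u in Ioi 0, ∫ t in Ioi 0, G u t * u ^ j * t ^ k := by
  have hpull : ∀ (F : ℝ → ℝ) (c : ℝ) (n : ℕ),
      ∫ t in Ioi 0, F t * c * t ^ n = (∫ t in Ioi 0, F t * t ^ n) * c := fun F c n => by
    rw [← integral_mul_const]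
    congr 1 with t
    ring
  simp_rw [hpull, integral_Ioi_comp_sq_mul_pow]
  rw [integral_Ioi_comp_sq_mul_pow (fun u => 2⁻¹ * ∫ t in Ioi 0, G u t * t ^ k),
    ← integral_const_mul, ← integral_const_mul]
  congr 1 with u
  ring

theorem integrableOn_pow_mul_exp_neg_mul (n : ℕ) {r : ℝ} (hr : 0 < r) :
    IntegrableOn (fun s : ℝ => s ^ n * exp (-(r * s))) (Ioi 0) := by
  simpa [Real.rpow_natCast] using
    integrableOn_rpow_mul_exp_neg_mul_rpow (s := n) (p := 1)
      (by linarith [n.cast_nonneg (α := ℝ)]) zero_lt_one hr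

theorem integral_pow_mul_exp_neg_mul (n : ℕ) {r : ℝ} (hr : 0 < r) :
    ∫ s in Ioi 0, s ^ n * exp (-(r * s)) = n ! / r ^ (n + 1) := by
  have h := integral_rpow_mul_exp_neg_mul_Ioi (a := n + 1) (by positivity) hr
  rw [add_sub_cancel_right, Real.Gamma_nat_eq_factorial, ← Nat.cast_succ, Real.rpow_natCast] at h
  simpa [div_eq_inv_mul] using h

noncomputable def simancaDensity (m : ℕ) (s : ℝ) : ℝ := exp (-m * s) / s ^ (m + 1) * (1 + s)

theorem simancaDensity_mul_pow (m n : ℕ) {s : ℝ} (hs : s ≠ 0) :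
    simancaDensity m s * s ^ (n + m + 1)
      = s ^ n * exp (-(m * s)) + s ^ (n + 1) * exp (-(m * s)) := by
  rw [simancaDensity, add_assoc, pow_add, pow_succ, neg_mul]
  field_simp
  ring

theorem integrableOn_simancaDensity_mul_pow {m : ℕ} (hm : 0 < m) (n : ℕ) :
    IntegrableOn (fun s => simancaDensity m s * s ^ (n + m + 1)) (Ioi 0) := by
  have hm' : (0 : ℝ) < m := by exact_mod_cast hm
  refine ((integrableOn_pow_mul_exp_neg_mul n hm').add
    (integrableOn_pow_mul_exp_neg_mul (n + 1) hm')).congr_fun (fun s hs => ?_) measurableSet_Ioi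
  exact (simancaDensity_mul_pow m n (ne_of_gt hs)).symm

theorem integral_simancaDensity_mul_pow {m : ℕ} (hm : 0 < m) (n : ℕ) :
    ∫ s in Ioi 0, simancaDensity m s * s ^ (n + m + 1)
      = (n + m + 1) * n ! / (m : ℝ) ^ (n + 2) := by
  have hm' : (0 : ℝ) < m := by exact_mod_cast hm
  rw [setIntegral_congr_fun measurableSet_Ioi fun s hs => simancaDensity_mul_pow m n (ne_of_gt hs),
    integral_add (integrableOn_pow_mul_exp_neg_mul n hm')
      (integrableOn_pow_mul_exp_neg_mul (n + 1) hm'),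
    integral_pow_mul_exp_neg_mul n hm', integral_pow_mul_exp_neg_mul (n + 1) hm',
    Nat.factorial_succ]
  field_simp
  push_cast
  ring

theorem simanca_monomial_norm (m j k : ℕ) (hm : 1 ≤ m) (hjk : m ≤ j + k) :
    4 * ∫ ρ₁ in Set.Ioi (0:ℝ), ∫ ρ₂ in Set.Ioi (0:ℝ),
        Real.exp (-(m:ℝ) * (ρ₁^2 + ρ₂^2)) / (ρ₁^2 + ρ₂^2)^(m+1)
          * (1 + ρ₁^2 + ρ₂^2) * ρ₁^(2*j+1) * ρ₂^(2*k+1)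
      = (j.factorial * k.factorial : ℝ) / (j+k).factorial
          * ((j+k-m).factorial : ℝ) / (m:ℝ)^(j+k-m+2) := by
  have hdeg : j + k + 1 = (j + k - m) + m + 1 := by omega
  have hradial_int := integrableOn_simancaDensity_mul_pow hm (j + k - m)
  have hradial := integral_simancaDensity_mul_pow hm (j + k - m)
  rw [← hdeg] at hradial_int hradial
  calc 4 * ∫ ρ₁ in Ioi 0, ∫ ρ₂ in Ioi 0,
        exp (-(m:ℝ) * (ρ₁^2 + ρ₂^2)) / (ρ₁^2 + ρ₂^2)^(m+1)
          * (1 + ρ₁^2 + ρ₂^2) * ρ₁^(2*j+1) * ρ₂^(2*k+1)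
      = 4 * ∫ ρ₁ in Ioi 0, ∫ ρ₂ in Ioi 0,
          simancaDensity m (ρ₁ ^ 2 + ρ₂ ^ 2) * ρ₁ ^ (2 * j + 1) * ρ₂ ^ (2 * k + 1) := by
        simp only [simancaDensity, add_assoc]
    _ = ∫ u in Ioi 0, ∫ t in Ioi 0, simancaDensity m (u + t) * u ^ j * t ^ k := by
        rw [integral_Ioi_Ioi_comp_sq (fun u t => simancaDensity m (u + t))]
        ring
    _ = (j ! * k ! / (j + k + 1)! : ℝ) * ∫ s in Ioi 0, simancaDensity m s * s ^ (j + k + 1) :=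
        integral_Ioi_Ioi_add_mul_pow (by unfold simancaDensity; fun_prop)
          (fun s hs => by unfold simancaDensity; positivity) j k hradial_int
    _ = _ := by
        rw [hradial, Nat.factorial_succ, Nat.cast_sub hjk]
        field_simp
        push_cast
        ring
end

section
/- For a positive integer $m$ and complex numbers $z_1, z_2$ not both zero, the sum over all pairs $(j,k)$ of natural numbers with $j+k \ge m$ of $\frac{e^{-m(|z_1|^2+|z_2|^2)}}{(|z_1|^2+|z_2|^2)^m}\cdot\frac{(j+k)!\,|z_1|^{2j}|z_2|^{2k}}{j!\,k!\,(j+k-m)!}\,m^{j+k-m+2}$ equals $m^2$. -/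
/-!
Group the terms by `n = j + k`. On each antidiagonal the binomial theorem collapses the sum to
`m ^ (n - m + 2) / (n - m)! * r ^ n` with `r = |z₁|² + |z₂|²`; after the shift `n ↦ n + m` the
remaining series is `m² r^m e^{m r}`, which the prefactor `e^{-m r} / r^m` cancels. All terms are
nonnegative, so the regrouping is legitimate.
-/

open Finset
open scoped Nat

theorem Real.hasSum_pow_div_factorial (x : ℝ) : HasSum (fun n ↦ x ^ n / n !) (Real.exp x) := by
  simpa only [Real.exp_eq_exp_ℝ] using NormedSpace.expSeries_div_hasSum_exp x

theorem hasSum_ite_le_iff_hasSum_add {M : Type*} [AddCommMonoid M] [TopologicalSpace M]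
    {g : ℕ → M} {k : ℕ} {a : M} :
    HasSum (fun n ↦ if k ≤ n then g n else 0) a ↔ HasSum (fun n ↦ g (n + k)) a := by
  rw [← (add_left_injective k).hasSum_iff]
  · simp [Function.comp_def]
  · intro n hn
    have hnk : n < k := by
      by_contra! h
      exact hn ⟨n - k, Nat.sub_add_cancel h⟩
    simp [Nat.not_le.2 hnk]

theorem hasSum_of_hasSum_sum_antidiagonal {A : Type*} [AddMonoid A] [HasAntidiagonal A]
    {f : A × A → ℝ} (hf : ∀ p, 0 ≤ f p) {a : ℝ}
    (h : HasSum (fun n ↦ ∑ p ∈ antidiagonal n, f p) a) : HasSum f a := by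
  rw [← (HasAntidiagonal.sigmaAntidiagonalEquivProd (A := A)).hasSum_iff]
  have hfib : ∀ n, HasSum (fun p : antidiagonal n ↦ f p) (∑ p ∈ antidiagonal n, f p) :=
    fun n ↦ (antidiagonal n).hasSum f
  refine h.sigma_of_hasSum hfib ((summable_sigma_of_nonneg fun _ ↦ hf _).2 ⟨?_, ?_⟩)
  · exact fun n ↦ (hfib n).summable
  · exact h.summable.congr fun n ↦ (hfib n).tsum_eq.symm

theorem hasSum_subtype_le_add_of_hasSum_sum_antidiagonal {f : ℕ × ℕ → ℝ} (hf : ∀ p, 0 ≤ f p)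
    {m : ℕ} {a : ℝ} (h : HasSum (fun n ↦ ∑ p ∈ antidiagonal (n + m), f p) a) :
    HasSum (fun p : {p : ℕ × ℕ // m ≤ p.1 + p.2} ↦ f p) a := by
  have hfib : ∀ n : ℕ, ∑ p ∈ antidiagonal n, {p : ℕ × ℕ | m ≤ p.1 + p.2}.indicator f p =
      if m ≤ n then ∑ p ∈ antidiagonal n, f p else 0 := by
    intro n
    split_ifs with hn
    · exact sum_congr rfl fun p hp ↦ Set.indicator_of_mem (by simpa [mem_antidiagonal.1 hp]) f
    · refine sum_eq_zero fun p hp ↦ Set.indicator_of_notMem ?_ f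
      simpa [mem_antidiagonal.1 hp] using hn
  refine hasSum_subtype_iff_indicator.2 (hasSum_of_hasSum_sum_antidiagonal
    (Set.indicator_nonneg fun p _ ↦ hf p) ?_)
  exact ((hasSum_ite_le_iff_hasSum_add (g := fun n ↦ ∑ p ∈ antidiagonal n, f p)).2 h).congr_fun hfib

theorem sum_antidiagonal_factorial_div_mul_pow {K : Type*} [Field K] [CharZero K] (x y : K)
    (n : ℕ) : ∑ p ∈ antidiagonal n, (n ! : K) / (p.1 ! * p.2 !) * (x ^ p.1 * y ^ p.2) =
      (x + y) ^ n := by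
  rw [(Commute.all x y).add_pow']
  refine sum_congr rfl fun p hp ↦ ?_
  rw [← mem_antidiagonal.1 hp, nsmul_eq_mul, Nat.cast_add_choose]

theorem sum_antidiagonal_add_factorial_mul_pow {K : Type*} [Field K] [CharZero K] (x y c : K)
    (m n : ℕ) :
    ∑ p ∈ antidiagonal (n + m), ((p.1 + p.2)! : K) * x ^ p.1 * y ^ p.2
        / (p.1 ! * p.2 ! * (p.1 + p.2 - m)!) * c ^ (p.1 + p.2 - m)
      = c ^ n / n ! * (x + y) ^ (n + m) := by
  rw [← sum_antidiagonal_factorial_div_mul_pow, mul_sum]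
  refine sum_congr rfl fun p hp ↦ ?_
  rw [mem_antidiagonal.1 hp, Nat.add_sub_cancel]
  field_simp

theorem simanca_epsilon_constant_general (m : ℕ) (z₁ z₂ : ℂ)
    (hz : (z₁, z₂) ≠ (0, 0)) :
    ∑' p : {p : ℕ × ℕ // m ≤ p.1 + p.2},
        Real.exp (-(m:ℝ) * (‖z₁‖^2 + ‖z₂‖^2))
          / (‖z₁‖^2 + ‖z₂‖^2)^m
          * ((p.1.1 + p.1.2).factorial * ‖z₁‖^(2*p.1.1) * ‖z₂‖^(2*p.1.2)
              / (p.1.1.factorial * p.1.2.factorial * (p.1.1 + p.1.2 - m).factorial))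
          * (m:ℝ)^(p.1.1 + p.1.2 - m + 2)
      = (m:ℝ)^2 := by
  set r : ℝ := ‖z₁‖ ^ 2 + ‖z₂‖ ^ 2
  have hr : r ≠ 0 := by
    simp only [Ne, Prod.mk.injEq, not_and_or, ← norm_pos_iff] at hz
    rcases hz with h | h <;> positivity
  have hexp := (Real.hasSum_pow_div_factorial (m * r)).mul_left (Real.exp (-m * r) * m ^ 2)
  rw [mul_right_comm, ← Real.exp_add, neg_mul, neg_add_cancel, Real.exp_zero, one_mul] at hexp
  refine (hasSum_subtype_le_add_of_hasSum_sum_antidiagonal (f := fun p : ℕ × ℕ ↦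
      Real.exp (-m * r) / r ^ m * ((p.1 + p.2)! * ‖z₁‖ ^ (2 * p.1) * ‖z₂‖ ^ (2 * p.2)
        / (p.1 ! * p.2 ! * (p.1 + p.2 - m)!)) * (m : ℝ) ^ (p.1 + p.2 - m + 2))
    (fun p ↦ by positivity) (hexp.congr_fun fun n ↦ ?_)).tsum_eq
  calc _ = Real.exp (-m * r) / r ^ m * m ^ 2 * ∑ p ∈ antidiagonal (n + m),
        ((p.1 + p.2)! : ℝ) * (‖z₁‖ ^ 2) ^ p.1 * (‖z₂‖ ^ 2) ^ p.2
          / (p.1 ! * p.2 ! * (p.1 + p.2 - m)!) * (m : ℝ) ^ (p.1 + p.2 - m) := by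
        rw [mul_sum]
        refine sum_congr rfl fun p _ ↦ ?_
        rw [pow_add, pow_mul, pow_mul]
        ring
    _ = Real.exp (-m * r) / r ^ m * m ^ 2 * ((m : ℝ) ^ n / n ! * r ^ (n + m)) := by
        rw [sum_antidiagonal_add_factorial_mul_pow]
    _ = _ := by
        rw [pow_add, mul_pow]
        field_simp

theorem simanca_epsilon_constant (m : ℕ) (hm : 1 ≤ m) (z₁ z₂ : ℂ)
    (hz : (z₁, z₂) ≠ (0, 0)) :
    ∑' p : {p : ℕ × ℕ // m ≤ p.1 + p.2},
        Real.exp (-(m:ℝ) * (‖z₁‖^2 + ‖z₂‖^2))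
          / (‖z₁‖^2 + ‖z₂‖^2)^m
          * ((p.1.1 + p.1.2).factorial * ‖z₁‖^(2*p.1.1) * ‖z₂‖^(2*p.1.2)
              / (p.1.1.factorial * p.1.2.factorial * (p.1.1 + p.1.2 - m).factorial))
          * (m:ℝ)^(p.1.1 + p.1.2 - m + 2)
      = (m:ℝ)^2 :=
  simanca_epsilon_constant_general m z₁ z₂ hz
end

section
/- For natural numbers $j,k$ with $j+k < m$ and $(j,k)$ not giving a convergent integral, the integral $\int_{\mathbb{C}^2\setminus\{0\}} |z_1|^{2j}|z_2|^{2k} \frac{e^{-m|z|^2}}{|z|^{2m}}\left(1+\frac{1}{|z|^2}\right) d\mu(z)$ diverges (equals $+\infty$). -/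
/-!
On a product of annuli `{r < |z₁| ≤ 2r} × {r < |z₂| ≤ 2r}` with `r ≤ 1` we have `|z|² ≤ 8r²`, so
the integrand is at least `c · r^(2(j+k)) / r^(2m+2) ≥ c / r⁴` with `c = e^(-8m) / 8^(m+1)`, the
last step because `j + k + 1 ≤ m`. The product has volume `(3πr²)²`, so each of the infinitely
many disjoint dyadic pieces `r = 2⁻ⁿ` contributes at least `9π²c` to the integral.
-/

open Real MeasureTheory Metric Function
open scoped ENNReal

noncomputable def monomialDensity (m j k : ℕ) (a b : ℝ) : ℝ :=
  a ^ (2 * j) * b ^ (2 * k) * (exp (-(m : ℝ) * (a ^ 2 + b ^ 2)) / (a ^ 2 + b ^ 2) ^ m)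
    * (1 + 1 / (a ^ 2 + b ^ 2))

theorem le_monomialDensity {m j k : ℕ} (h : j + k < m) {q a b : ℝ} (hq : 0 < q) (hq1 : q ≤ 1)
    (ha : q < a) (ha2 : a ≤ 2 * q) (hb : q < b) (hb2 : b ≤ 2 * q) :
    exp (-(8 * m : ℝ)) / 8 ^ (m + 1) / q ^ 4 ≤ monomialDensity m j k a b := by
  have ha0 : 0 < a := hq.trans ha
  have hb0 : 0 < b := hq.trans hb
  have hs : 0 < a ^ 2 + b ^ 2 := by positivity
  have hs8 : a ^ 2 + b ^ 2 ≤ 8 * q ^ 2 := by nlinarith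
  have hmonomial : q ^ (2 * j) * q ^ (2 * k) ≤ a ^ (2 * j) * b ^ (2 * k) := by gcongr
  have hgauss : exp (-(8 * m : ℝ)) / (8 * q ^ 2) ^ m
      ≤ exp (-(m : ℝ) * (a ^ 2 + b ^ 2)) / (a ^ 2 + b ^ 2) ^ m := by
    have hs_le : a ^ 2 + b ^ 2 ≤ 8 := hs8.trans (by nlinarith)
    have := mul_le_mul_of_nonneg_left hs_le (Nat.cast_nonneg m : (0 : ℝ) ≤ m)
    gcongr
    linarith
  have hinv : 1 / (8 * q ^ 2) ≤ 1 + 1 / (a ^ 2 + b ^ 2) := by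
    have := one_div_le_one_div_of_le hs hs8
    linarith
  have hpow : q ^ (2 * m + 2) ≤ q ^ (2 * j) * q ^ (2 * k) * q ^ 4 := by
    rw [← pow_add, ← pow_add]
    exact pow_le_pow_of_le_one hq.le hq1 (by omega)
  calc exp (-(8 * m : ℝ)) / 8 ^ (m + 1) / q ^ 4
      ≤ exp (-(8 * m : ℝ)) / 8 ^ (m + 1) * (q ^ (2 * j) * q ^ (2 * k) / q ^ (2 * m + 2)) := by
        rw [div_eq_mul_one_div _ (q ^ 4)]
        refine mul_le_mul_of_nonneg_left ?_ (by positivity)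
        rw [div_le_div_iff₀ (by positivity) (by positivity)]
        linarith
    _ = q ^ (2 * j) * q ^ (2 * k) * (exp (-(8 * m : ℝ)) / (8 * q ^ 2) ^ m)
          * (1 / (8 * q ^ 2)) := by
        field_simp
        ring
    _ ≤ monomialDensity m j k a b := by
        unfold monomialDensity
        gcongr

def annulus (r : ℝ) : Set ℂ := closedBall 0 (2 * r) \ closedBall 0 r

theorem mem_annulus {r : ℝ} {w : ℂ} : w ∈ annulus r ↔ r < ‖w‖ ∧ ‖w‖ ≤ 2 * r := by
  simp [annulus, and_comm]

theorem zero_notMem_annulus (r : ℝ) : (0 : ℂ) ∉ annulus r := by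
  rw [mem_annulus, norm_zero]
  rintro ⟨hr, hr2⟩
  linarith

theorem measurableSet_annulus (r : ℝ) : MeasurableSet (annulus r) :=
  measurableSet_closedBall.diff measurableSet_closedBall

theorem volume_annulus {r : ℝ} (hr : 0 ≤ r) :
    volume (annulus r) = ENNReal.ofReal (3 * π * r ^ 2) := by
  rw [annulus, measure_sdiff (closedBall_subset_closedBall (by linarith))
      measurableSet_closedBall.nullMeasurableSet measure_closedBall_lt_top.ne,
    Complex.volume_closedBall, Complex.volume_closedBall, ← ENNReal.ofReal_coe_nnreal,
    NNReal.coe_real_pi, ← ENNReal.ofReal_pow (by linarith), ← ENNReal.ofReal_pow hr,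
    ← ENNReal.ofReal_mul (by positivity), ← ENNReal.ofReal_mul (by positivity),
    ← ENNReal.ofReal_sub _ (by positivity)]
  congr 1
  ring

theorem disjoint_annulus_of_two_mul_le {r s : ℝ} (h : 2 * r ≤ s) :
    Disjoint (annulus r) (annulus s) :=
  Set.disjoint_left.2 fun _ hr hs ↦ hs.2 (closedBall_subset_closedBall h hr.1)

theorem pairwise_disjoint_annulus_half_pow :
    Pairwise (Disjoint on fun n : ℕ ↦ annulus ((2 : ℝ)⁻¹ ^ n)) := by
  refine (pairwise_disjoint_on _).2 fun n l hnl ↦ (disjoint_annulus_of_two_mul_le ?_).symm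
  have := pow_le_pow_of_le_one (a := (2 : ℝ)⁻¹) (by norm_num) (by norm_num) hnl
  rw [pow_succ] at this
  linarith

theorem setLIntegral_eq_top_of_pairwise_disjoint {α ι : Type*} [MeasurableSpace α] [Countable ι]
    [Infinite ι] {μ : Measure α} {f : α → ℝ≥0∞} {s : Set α} {A : ι → Set α} {c : ℝ≥0∞}
    (hc : c ≠ 0) (hA : ∀ i, MeasurableSet (A i)) (hdisj : Pairwise (Disjoint on A))
    (hsub : ∀ i, A i ⊆ s) (hle : ∀ i, c ≤ ∫⁻ x in A i, f x ∂μ) :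
    ∫⁻ x in s, f x ∂μ = ⊤ := by
  refine top_le_iff.1 ?_
  calc ⊤ = ∑' _ : ι, c := (ENNReal.tsum_const_eq_top_of_ne_zero hc).symm
    _ ≤ ∑' i, ∫⁻ x in A i, f x ∂μ := ENNReal.tsum_le_tsum hle
    _ = ∫⁻ x in ⋃ i, A i, f x ∂μ := (lintegral_iUnion hA hdisj f).symm
    _ ≤ ∫⁻ x in s, f x ∂μ := lintegral_mono_set (Set.iUnion_subset hsub)

theorem le_setLIntegral_monomialDensity {m j k : ℕ} (h : j + k < m) {r : ℝ} (hr : 0 < r)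
    (hr1 : r ≤ 1) :
    ENNReal.ofReal (9 * π ^ 2 * (exp (-(8 * m : ℝ)) / 8 ^ (m + 1)))
      ≤ ∫⁻ z in annulus r ×ˢ annulus r, ENNReal.ofReal (monomialDensity m j k ‖z.1‖ ‖z.2‖) := by
  calc ENNReal.ofReal (9 * π ^ 2 * (exp (-(8 * m : ℝ)) / 8 ^ (m + 1)))
      = ∫⁻ _ in annulus r ×ˢ annulus r,
          ENNReal.ofReal (exp (-(8 * m : ℝ)) / 8 ^ (m + 1) / r ^ 4) := by
        rw [setLIntegral_const, Measure.volume_eq_prod, Measure.prod_prod, volume_annulus hr.le,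
          ← ENNReal.ofReal_mul (by positivity), ← ENNReal.ofReal_mul (by positivity)]
        congr 1
        field_simp
        ring
    _ ≤ _ := by
        refine setLIntegral_mono' ((measurableSet_annulus r).prod (measurableSet_annulus r))
          fun z hz ↦ ENNReal.ofReal_le_ofReal ?_
        obtain ⟨⟨ha, ha2⟩, ⟨hb, hb2⟩⟩ := And.imp mem_annulus.1 mem_annulus.1 hz
        exact le_monomialDensity h hr hr1 ha ha2 hb hb2

theorem simanca_low_monomials_divergent_general (m : ℕ)
    (j k : ℕ) (h : j + k < m) :
    ∫⁻ z in {p : ℂ × ℂ | p ≠ 0},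
        ENNReal.ofReal (‖z.1‖^(2*j) * ‖z.2‖^(2*k)
          * (Real.exp (-(m:ℝ) * (‖z.1‖^2 + ‖z.2‖^2))
              / (‖z.1‖^2 + ‖z.2‖^2)^m)
          * (1 + 1 / (‖z.1‖^2 + ‖z.2‖^2)))
      = ⊤ := by
  refine setLIntegral_eq_top_of_pairwise_disjoint
    (A := fun n : ℕ ↦ annulus ((2 : ℝ)⁻¹ ^ n) ×ˢ annulus ((2 : ℝ)⁻¹ ^ n))
    (ENNReal.ofReal_pos.2 (by positivity)).ne'
    (fun n ↦ (measurableSet_annulus _).prod (measurableSet_annulus _))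
    (fun n l hnl ↦ Set.disjoint_prod.2 (.inl (pairwise_disjoint_annulus_half_pow hnl)))
    (fun n z hz hz0 ↦ zero_notMem_annulus _ (hz0 ▸ hz.1))
    (fun n ↦ le_setLIntegral_monomialDensity h (by positivity)
      (pow_le_one₀ (by norm_num) (by norm_num)))

theorem simanca_low_monomials_divergent (m : ℕ) (hm : 1 ≤ m)
    (j k : ℕ) (h : j + k < m) :
    ∫⁻ z in {p : ℂ × ℂ | p ≠ 0},
        ENNReal.ofReal (‖z.1‖^(2*j) * ‖z.2‖^(2*k)
          * (Real.exp (-(m:ℝ) * (‖z.1‖^2 + ‖z.2‖^2))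
              / (‖z.1‖^2 + ‖z.2‖^2)^m)
          * (1 + 1 / (‖z.1‖^2 + ‖z.2‖^2)))
      = ⊤ :=
  simanca_low_monomials_divergent_general m j k h
end

section
/- Let $c_k = \frac{k!\,(k+m+n-1)!}{(k+m)!\,(k+n-1)!\,{}_1F_1(1-n,\,1-k-n,\,m)}$ for natural numbers $k$, where $n \ge 1$ and $m \ge 1$ are fixed integers and ${}_1F_1$ is the (terminating) confluent hypergeometric function. Then as $k \to \infty$, $c_k = 1 + \frac{m(n-1)(n-2)}{2k^2} + O(k^{-3})$. -/
/-
With `p = n - 1`, both the factorial quotient and `₁F₁(-p; -(k + p); m)` have expansions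
`1 + β / k + γ / k ^ 2 + O(k⁻³)`. The quotient is `∏ i < m, (1 + p / (k + i + 1))`, and the
`s`-th term of `₁F₁` is `m ^ s / s!` times a product of `s` factors `(p - i) / (k + p - i)`, each
`O(1/k)`, so only `s ≤ 2` contribute. Such expansions multiply, and invert when the constant term
is `1`, like power series in `1/k` truncated after the quadratic term. Numerator and denominator
both have `β = m p`, which cancels in the quotient, and the quadratic coefficients differ by
`m p (p - 1) / 2`.
-/

open Real Asymptotics Filter

/-- The terminating confluent hypergeometric function `₁F₁(-p, b, z)`. -/
noncomputable def oneFOne (p : ℕ) (b z : ℝ) : ℝ :=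
  ∑ s ∈ Finset.range (p+1),
    ((∏ i ∈ Finset.range s, (-(p:ℝ) + i)) / (∏ i ∈ Finset.range s, (b + i)))
      * z^s / (s.factorial : ℝ)

open Finset Topology Nat

def HasSecondOrderExpansion (f : ℕ → ℝ) (a b c : ℝ) : Prop :=
  (fun k : ℕ => f k - (a + b / k + c / k ^ 2)) =O[atTop] fun k : ℕ => ((k : ℝ) ^ 3)⁻¹

lemma isBigO_inv_pow_of_le {i j : ℕ} (h : i ≤ j) :
    (fun k : ℕ => ((k : ℝ) ^ j)⁻¹) =O[atTop] fun k : ℕ => ((k : ℝ) ^ i)⁻¹ := by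
  refine IsBigO.of_bound 1 ?_
  filter_upwards [eventually_ge_atTop 1] with k hk
  have hk : (1 : ℝ) ≤ k := by exact_mod_cast hk
  rw [one_mul, norm_inv, norm_inv, norm_pow, norm_pow, Real.norm_natCast]
  exact inv_pow_le_inv_pow_of_le hk h

namespace HasSecondOrderExpansion

variable {f g : ℕ → ℝ} {a b c a' b' c' : ℝ}

lemma congr' (hf : HasSecondOrderExpansion f a b c) (h : f =ᶠ[atTop] g) :
    HasSecondOrderExpansion g a b c :=
  IsBigO.congr' hf (by filter_upwards [h] with k hk; rw [hk]) EventuallyEq.rfl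

lemma congr_coeffs (hf : HasSecondOrderExpansion f a b c) (ha : a = a') (hb : b = b')
    (hc : c = c') : HasSecondOrderExpansion f a' b' c' := by
  subst ha hb hc; exact hf

lemma quadratic (a b c : ℝ) :
    HasSecondOrderExpansion (fun k => a + b / k + c / k ^ 2) a b c :=
  (isBigO_zero _ _).congr_left fun _ => (sub_self _).symm

lemma const (a : ℝ) : HasSecondOrderExpansion (fun _ => a) a 0 0 :=
  (quadratic a 0 0).congr' (Eventually.of_forall fun _ => by simp)

lemma tendsto (hf : HasSecondOrderExpansion f a b c) : Tendsto f atTop (𝓝 a) := by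
  have hinv : Tendsto (fun k : ℕ => (k : ℝ)⁻¹) atTop (𝓝 0) := tendsto_inv_atTop_nhds_zero_nat
  have hrem : Tendsto (fun k : ℕ => f k - (a + b / k + c / k ^ 2)) atTop (𝓝 0) :=
    hf.trans_tendsto (by simpa using hinv.pow 3)
  have hquad : Tendsto (fun k : ℕ => a + b / k + c / k ^ 2) atTop (𝓝 a) := by
    simpa [div_eq_mul_inv] using
      (tendsto_const_nhds.add (hinv.const_mul b)).add ((hinv.pow 2).const_mul c)
  simpa using hrem.add hquad

lemma isBigO_one (hf : HasSecondOrderExpansion f a b c) : f =O[atTop] fun _ => (1 : ℝ) :=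
  hf.tendsto.isBigO_one ℝ

lemma add (hf : HasSecondOrderExpansion f a b c) (hg : HasSecondOrderExpansion g a' b' c') :
    HasSecondOrderExpansion (fun k => f k + g k) (a + a') (b + b') (c + c') :=
  (IsBigO.add hf hg).congr_left fun k => by ring

lemma const_mul (hf : HasSecondOrderExpansion f a b c) (r : ℝ) :
    HasSecondOrderExpansion (fun k => r * f k) (r * a) (r * b) (r * c) :=
  (hf.const_mul_left r).congr_left fun k => by ring

lemma mul (hf : HasSecondOrderExpansion f a b c) (hg : HasSecondOrderExpansion g a' b' c') :
    HasSecondOrderExpansion (fun k => f k * g k) (a * a') (a * b' + b * a')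
      (a * c' + b * b' + c * a') := by
  have hcross : (fun k : ℕ => (b * c' + c * b') / (k : ℝ) ^ 3 + c * c' / (k : ℝ) ^ 4)
      =O[atTop] fun k : ℕ => ((k : ℝ) ^ 3)⁻¹ := by
    simp only [div_eq_mul_inv]
    exact ((isBigO_refl _ _).const_mul_left _).add
      ((isBigO_inv_pow_of_le (by norm_num)).const_mul_left _)
  have hfg := (IsBigO.mul hf hg.isBigO_one).congr_right fun _ => mul_one _
  have hEg := (IsBigO.mul (quadratic a b c).isBigO_one hg).congr_right fun _ => one_mul _
  -- with `E_f`, `E_g` the quadratic parts and `T` that of their product,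
  -- `f g - T = (f - E_f) g + E_f (g - E_g) + (E_f E_g - T)`, and `E_f E_g - T` is `hcross`
  refine ((hfg.add hEg).add hcross).congr_left fun k => ?_
  ring

lemma inv (hf : HasSecondOrderExpansion f 1 b c) :
    HasSecondOrderExpansion (fun k => (f k)⁻¹) 1 (-b) (b ^ 2 - c) := by
  have hfQ := hf.mul (quadratic 1 (-b) (b ^ 2 - c))
  have hinv := (hf.tendsto.inv₀ one_ne_zero).isBigO_one ℝ
  refine (IsBigO.mul hfQ hinv).neg_left.congr' ?_ (Eventually.of_forall fun _ => mul_one _)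
  filter_upwards [hf.tendsto.eventually_ne one_ne_zero] with k hk
  field_simp
  ring

lemma sum {ι : Type*} (s : Finset ι) {f : ι → ℕ → ℝ} {a b c : ι → ℝ}
    (h : ∀ i ∈ s, HasSecondOrderExpansion (f i) (a i) (b i) (c i)) :
    HasSecondOrderExpansion (fun k => ∑ i ∈ s, f i k) (∑ i ∈ s, a i) (∑ i ∈ s, b i)
      (∑ i ∈ s, c i) :=
  (IsBigO.fun_sum h).congr_left fun k => by
    simp only [sum_sub_distrib, sum_add_distrib, sum_div]

lemma prod_range_one_add {f : ℕ → ℕ → ℝ} {b : ℝ} {c : ℕ → ℝ}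
    (h : ∀ i, HasSecondOrderExpansion (f i) 1 b (c i)) (m : ℕ) :
    HasSecondOrderExpansion (fun k => ∏ i ∈ range m, f i k) 1 (m * b)
      (m * (m - 1) / 2 * b ^ 2 + ∑ i ∈ range m, c i) := by
  induction m with
  | zero => simpa using const 1
  | succ m ih =>
    simp only [prod_range_succ]
    exact (ih.mul (h m)).congr_coeffs (by ring) (by push_cast; ring)
      (by rw [sum_range_succ]; push_cast; ring)

lemma prod_range_two {g : ℕ → ℕ → ℝ} {b c : ℕ → ℝ}
    (h : ∀ i, HasSecondOrderExpansion (g i) 0 (b i) (c i)) :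
    HasSecondOrderExpansion (fun k => ∏ i ∈ range 2, g i k) 0 0 (b 0 * b 1) := by
  simp only [prod_range_succ, prod_range_zero, one_mul]
  exact ((h 0).mul (h 1)).congr_coeffs (by ring) (by ring) (by ring)

lemma prod_range_add_three {g : ℕ → ℕ → ℝ} {b c : ℕ → ℝ}
    (h : ∀ i, HasSecondOrderExpansion (g i) 0 (b i) (c i)) (s : ℕ) :
    HasSecondOrderExpansion (fun k => ∏ i ∈ range (s + 3), g i k) 0 0 0 := by
  induction s with
  | zero =>
    simp only [zero_add, prod_range_succ _ 2]
    exact ((prod_range_two h).mul (h 2)).congr_coeffs (by ring) (by ring) (by ring)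
  | succ s ih =>
    simp only [add_right_comm s 1 3, prod_range_succ _ (s + 3)]
    exact (ih.mul (h (s + 3))).congr_coeffs (by ring) (by ring) (by ring)

end HasSecondOrderExpansion

lemma hasSecondOrderExpansion_inv_add (a : ℝ) :
    HasSecondOrderExpansion (fun k => ((k : ℝ) + a)⁻¹) 0 1 (-a) := by
  have h := (HasSecondOrderExpansion.quadratic 0 1 0).mul
    (HasSecondOrderExpansion.quadratic 1 a 0).inv
  refine (h.congr' ?_).congr_coeffs (by ring) (by ring) (by ring)
  filter_upwards [tendsto_natCast_atTop_atTop.eventually_gt_atTop |a|] with k hk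
  have hk0 : (k : ℝ) ≠ 0 := by linarith [abs_nonneg a]
  have hka : (k : ℝ) + a ≠ 0 := by linarith [neg_abs_le a]
  field_simp
  ring

lemma hasSecondOrderExpansion_prod_one_add_div (c : ℝ) (m : ℕ) :
    HasSecondOrderExpansion (fun k => ∏ i ∈ range m, (1 + c / ((k : ℝ) + (i + 1)))) 1 (m * c)
      (m * (m - 1) / 2 * c ^ 2 - c * (m * (m + 1) / 2)) := by
  have hfactor (i : ℕ) : HasSecondOrderExpansion (fun k => 1 + c / ((k : ℝ) + (i + 1))) 1 c
      (-(c * (i + 1))) := by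
    simp only [div_eq_mul_inv]
    exact ((HasSecondOrderExpansion.const 1).add
      ((hasSecondOrderExpansion_inv_add _).const_mul c)).congr_coeffs (by ring) (by ring) (by ring)
  have hgauss : ∑ i ∈ range m, ((i : ℝ) + 1) = m * (m + 1) / 2 := by
    induction m with
    | zero => simp
    | succ m ih => rw [sum_range_succ, ih]; push_cast; ring
  refine (HasSecondOrderExpansion.prod_range_one_add hfactor m).congr_coeffs rfl rfl ?_
  rw [sum_neg_distrib, ← mul_sum, hgauss]
  ring

lemma factorial_mul_factorial_div_eq_prod (k m p : ℕ) :
    (k ! * (k + m + p)! : ℝ) / ((k + m)! * (k + p)!) =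
      ∏ i ∈ range m, (1 + p / ((k : ℝ) + (i + 1))) := by
  rw [show k + m + p = k + p + m by ring, ← factorial_mul_ascFactorial (k + p) m,
    ← factorial_mul_ascFactorial k m, ascFactorial_eq_prod_range, ascFactorial_eq_prod_range]
  have hk : (k ! : ℝ) ≠ 0 := by positivity
  have hkp : ((k + p)! : ℝ) ≠ 0 := by positivity
  have hfactor (i : ℕ) : 1 + p / ((k : ℝ) + (i + 1)) = (k + p + 1 + i) / (k + 1 + i) := by
    field_simp
    ring
  have hB : ∏ i ∈ range m, ((k : ℝ) + 1 + i) ≠ 0 := by positivity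
  push_cast
  simp only [hfactor, prod_div_distrib]
  field_simp

lemma oneFOne_eq_sum_range_of_le (p N : ℕ) (b z : ℝ) (hN : p + 1 ≤ N) :
    oneFOne p b z = ∑ s ∈ range N, z ^ s / s ! * ∏ i ∈ range s, (-(p : ℝ) + i) / (b + i) := by
  rw [oneFOne, ← sum_subset (range_subset_range.2 hN)]
  · exact sum_congr rfl fun s _ => by rw [prod_div_distrib]; ring
  · intro s _ hs
    have hp : p ∈ range s := mem_range.2 (by simpa using hs)
    rw [prod_eq_zero hp (by ring), mul_zero]

lemma hasSecondOrderExpansion_oneFOne (p : ℕ) (z : ℝ) :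
    HasSecondOrderExpansion (fun k => oneFOne p (-((k : ℝ) + p)) z) 1 (p * z)
      (p * (p - 1) / 2 * z ^ 2 - p ^ 2 * z) := by
  have hg (i : ℕ) : HasSecondOrderExpansion (fun k => (-(p : ℝ) + i) / (-((k : ℝ) + p) + i)) 0
      (p - i) (-(p - i) ^ 2) :=
    (((hasSecondOrderExpansion_inv_add (p - i)).const_mul (p - i)).congr'
      (Eventually.of_forall fun k => by
        rw [show -((k : ℝ) + p) + i = -(k + (p - i)) by ring, div_neg, div_eq_mul_inv]
        ring)).congr_coeffs (by ring) (by ring) (by ring)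
  have hsum := (((HasSecondOrderExpansion.const 1).add ((hg 0).const_mul z)).add
    ((HasSecondOrderExpansion.prod_range_two hg).const_mul (z ^ 2 / 2))).add
    (HasSecondOrderExpansion.sum (range p) fun s _ =>
      (HasSecondOrderExpansion.prod_range_add_three hg s).const_mul (z ^ (s + 3) / (s + 3)!))
  simp only [mul_zero, sum_const_zero, Nat.cast_zero, Nat.cast_one, sub_zero] at hsum
  refine (hsum.congr' (Eventually.of_forall fun k => ?_)).congr_coeffs (by ring) (by ring) (by ring)
  rw [oneFOne_eq_sum_range_of_le p (3 + p) _ _ (by omega), sum_range_add]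
  simp [sum_range_succ, add_comm]

theorem epsilon_coefficient_asymptotics_general (n m : ℕ) (hn : 1 ≤ n) :
    (fun k : ℕ =>
        ((k.factorial : ℝ) * (k+m+n-1).factorial
            / ((k+m).factorial * (k+n-1).factorial
                * oneFOne (n-1) (1 - (k:ℝ) - n) m))
          - (1 + (m:ℝ) * (n-1) * (n-2) / (2 * (k:ℝ)^2)))
      =O[atTop] fun k : ℕ => ((k:ℝ)^3)⁻¹ := by
  obtain ⟨p, rfl⟩ : ∃ p, n = p + 1 := ⟨n - 1, by omega⟩
  have hratio := ((hasSecondOrderExpansion_prod_one_add_div p m).mul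
    (hasSecondOrderExpansion_oneFOne p m).inv).congr_coeffs (a' := 1) (b' := 0)
    (c' := m * p * (p - 1) / 2) (by ring) (by ring) (by ring)
  refine hratio.congr_left fun k => ?_
  rw [show k + m + (p + 1) - 1 = k + m + p by omega, show k + (p + 1) - 1 = k + p by omega,
    Nat.add_sub_cancel, div_mul_eq_div_div, factorial_mul_factorial_div_eq_prod,
    show 1 - (k : ℝ) - ((p + 1 : ℕ) : ℝ) = -(k + p) by push_cast; ring]
  push_cast
  ring

theorem epsilon_coefficient_asymptotics (n m : ℕ) (hn : 1 ≤ n) (hm : 1 ≤ m) :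
    (fun k : ℕ =>
        ((k.factorial : ℝ) * (k+m+n-1).factorial
            / ((k+m).factorial * (k+n-1).factorial
                * oneFOne (n-1) (1 - (k:ℝ) - n) m))
          - (1 + (m:ℝ) * (n-1) * (n-2) / (2 * (k:ℝ)^2)))
      =O[atTop] fun k : ℕ => ((k:ℝ)^3)⁻¹ :=
  epsilon_coefficient_asymptotics_general n m hn
end

section
/- For integers $n \ge 3$ and $m \ge 1$, the sequence $c_k = \frac{k!\,(k+m+n-1)!}{(k+m)!\,(k+n-1)!\,{}_1F_1(1-n,\,1-k-n,\,m)}$ (for $k \in \mathbb{N}$) is not constant in $k$. -/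
open Real

/-!
At `k = 0` and `k = 1` the series `₁F₁(1 - n, 1 - k - n, m)` collapses to the exponential
partial sum `E = ∑_{s<n} m^s/s!` and to `W/n` with `W = ∑_{s<n} (n - s) m^s/s!`, so that
`c₁ < c₀` amounts to `(m + n) E < (m + 1) W`. The two sides differ by exactly
`m ∑_{s<n-2} (n - 2 - s) m^s/s!`, which is positive once `n ≥ 3`.
-/

open Finset

noncomputable def expPartialSum (x : ℝ) (n : ℕ) : ℝ :=
  ∑ s ∈ range n, x ^ s / s.factorial

noncomputable def weightedExpPartialSum (x : ℝ) (n : ℕ) : ℝ :=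
  ∑ s ∈ range n, ((n : ℝ) - s) * x ^ s / s.factorial

section PartialSums

variable (x : ℝ) (n : ℕ)

lemma expPartialSum_succ : expPartialSum x (n + 1) = expPartialSum x n + x ^ n / n.factorial :=
  sum_range_succ _ _

lemma weightedExpPartialSum_succ :
    weightedExpPartialSum x (n + 1) = weightedExpPartialSum x n + expPartialSum x (n + 1) := by
  unfold weightedExpPartialSum expPartialSum
  rw [sum_range_succ, sum_range_succ (fun s : ℕ => x ^ s / (s.factorial : ℝ)), ← add_assoc,
    ← sum_add_distrib]
  congr 1
  · exact sum_congr rfl fun s _ => by push_cast; ring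
  · push_cast; ring

lemma succ_mul_pow_succ_div_factorial :
    ((n : ℝ) + 1) * (x ^ (n + 1) / (n + 1).factorial) = x * (x ^ n / n.factorial) := by
  rw [Nat.factorial_succ]
  push_cast
  field_simp
  ring

lemma add_one_mul_weightedExpPartialSum (p : ℕ) :
    (x + 1) * weightedExpPartialSum x (p + 2)
      = (x + p + 2) * expPartialSum x (p + 2) + x * weightedExpPartialSum x p := by
  induction p with
  | zero =>
    simp only [weightedExpPartialSum, expPartialSum, sum_range_succ, sum_range_zero,
      Nat.factorial_zero, Nat.factorial_one]
    push_cast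
    ring
  | succ p ih =>
    rw [weightedExpPartialSum_succ x (p + 2), weightedExpPartialSum_succ x p, mul_add, ih,
      expPartialSum_succ x (p + 2), expPartialSum_succ x (p + 1)]
    have h := succ_mul_pow_succ_div_factorial x (p + 1)
    push_cast at h ⊢
    linear_combination -h

end PartialSums

lemma expPartialSum_pos {x : ℝ} (hx : 0 ≤ x) {n : ℕ} (hn : 0 < n) : 0 < expPartialSum x n :=
  sum_pos' (fun s _ => by positivity) ⟨0, mem_range.2 hn, by simp⟩

lemma weightedExpPartialSum_pos {x : ℝ} (hx : 0 < x) {n : ℕ} (hn : 0 < n) :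
    0 < weightedExpPartialSum x n := by
  refine sum_pos (fun s hs => ?_) ⟨0, mem_range.2 hn⟩
  have : (s : ℝ) < n := by exact_mod_cast mem_range.1 hs
  have : 0 < (n : ℝ) - s := by linarith
  positivity

lemma add_mul_expPartialSum_lt_add_one_mul_weightedExpPartialSum {x : ℝ} (hx : 0 < x) {n : ℕ}
    (hn : 3 ≤ n) :
    (x + n) * expPartialSum x n < (x + 1) * weightedExpPartialSum x n := by
  obtain ⟨p, rfl⟩ : ∃ p, n = p + 2 := ⟨n - 2, by omega⟩
  have hW := weightedExpPartialSum_pos hx (n := p) (by omega)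
  have := add_one_mul_weightedExpPartialSum x p
  have := mul_pos hx hW
  push_cast
  linarith

lemma prod_range_add_one_add_mul {R : Type*} [CommRing R] (a : R) (s : ℕ) :
    (∏ i ∈ range s, (a + 1 + i)) * a = (∏ i ∈ range s, (a + i)) * (a + s) := by
  rw [← prod_range_succ (fun i : ℕ => a + i), prod_range_succ', Nat.cast_zero, add_zero]
  exact congrArg (· * a) (prod_congr rfl fun i _ => by push_cast; ring)

lemma prod_range_neg_add_ne_zero {p s : ℕ} (hs : s ≤ p) :
    ∏ i ∈ range s, (-(p : ℝ) + i) ≠ 0 := by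
  refine prod_ne_zero_iff.2 fun i hi => ?_
  have : (i : ℝ) < p := by exact_mod_cast (mem_range.1 hi).trans_le hs
  linarith

lemma oneFOne_neg_self (p : ℕ) (z : ℝ) : oneFOne p (-p) z = expPartialSum z (p + 1) := by
  refine sum_congr rfl fun s hs => ?_
  rw [div_self (prod_range_neg_add_ne_zero (Nat.lt_succ_iff.1 (mem_range.1 hs))), one_mul]

lemma oneFOne_neg_succ (p : ℕ) (z : ℝ) :
    oneFOne p (-((p : ℝ) + 1)) z = weightedExpPartialSum z (p + 1) / (p + 1) := by
  unfold oneFOne weightedExpPartialSum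
  rw [sum_div]
  refine sum_congr rfl fun s hs => ?_
  have hs : s ≤ p + 1 := (mem_range.1 hs).le
  have hden : ∏ i ∈ range s, (-((p : ℝ) + 1) + i) ≠ 0 := by
    simpa using prod_range_neg_add_ne_zero (p := p + 1) hs
  have hb : -((p : ℝ) + 1) ≠ 0 := neg_ne_zero.2 (by positivity)
  have hratio : (∏ i ∈ range s, (-(p : ℝ) + i)) / ∏ i ∈ range s, (-((p : ℝ) + 1) + i)
      = (-((p : ℝ) + 1) + s) / -((p : ℝ) + 1) := by
    rw [div_eq_div_iff hden hb, mul_comm _ (∏ i ∈ range s, _), ← prod_range_add_one_add_mul]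
    exact congrArg (· * _) (prod_congr rfl fun i _ => by ring)
  rw [hratio]
  push_cast
  field_simp
  ring

noncomputable def epsilonCoefficient (n m k : ℕ) : ℝ :=
  (k.factorial : ℝ) * (k+m+n-1).factorial
    / ((k+m).factorial * (k+n-1).factorial * oneFOne (n-1) (1 - (k:ℝ) - n) m)

section EpsilonCoefficient

variable (m p : ℕ)

lemma epsilonCoefficient_zero :
    epsilonCoefficient (p + 1) m 0
      = (m + p).factorial / (m.factorial * p.factorial * expPartialSum m (p + 1)) := by
  rw [epsilonCoefficient, show (1 : ℝ) - ((0 : ℕ) : ℝ) - ((p + 1 : ℕ) : ℝ) = -(p : ℝ) by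
    push_cast; ring, ← oneFOne_neg_self]
  simp only [Nat.factorial_zero, Nat.cast_one, one_mul, zero_add, Nat.add_sub_cancel,
    ← add_assoc]

lemma epsilonCoefficient_one :
    epsilonCoefficient (p + 1) m 1
      = (m + p + 1) * (m + p).factorial
          / ((m + 1) * m.factorial * p.factorial * weightedExpPartialSum m (p + 1)) := by
  rw [epsilonCoefficient, show (1 : ℝ) - ((1 : ℕ) : ℝ) - ((p + 1 : ℕ) : ℝ) = -((p : ℝ) + 1) by
    push_cast; ring, Nat.add_sub_cancel, oneFOne_neg_succ,
    show 1 + m + (p + 1) - 1 = m + p + 1 by omega, show 1 + (p + 1) - 1 = p + 1 by omega,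
    add_comm 1 m, Nat.factorial_one, Nat.factorial_succ (m + p), Nat.factorial_succ m,
    Nat.factorial_succ p]
  push_cast
  field_simp

end EpsilonCoefficient

lemma epsilonCoefficient_one_lt_zero {n m : ℕ} (hn : 3 ≤ n) (hm : 1 ≤ m) :
    epsilonCoefficient n m 1 < epsilonCoefficient n m 0 := by
  obtain ⟨p, rfl⟩ : ∃ p, n = p + 1 := ⟨n - 1, by omega⟩
  have hx : (0 : ℝ) < m := by exact_mod_cast hm
  have hlt := add_mul_expPartialSum_lt_add_one_mul_weightedExpPartialSum hx hn
  have hE := expPartialSum_pos hx.le (n := p + 1) (by omega)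
  have hW := weightedExpPartialSum_pos hx (n := p + 1) (by omega)
  rw [epsilonCoefficient_zero, epsilonCoefficient_one,
    div_lt_div_iff₀ (by positivity) (by positivity)]
  have hfac : (0 : ℝ) < (m + p).factorial * m.factorial * p.factorial := by positivity
  push_cast at hlt
  calc _ = ((m + p).factorial * m.factorial * p.factorial : ℝ)
          * ((m + p + 1) * expPartialSum m (p + 1)) := by ring
    _ < (m + p).factorial * m.factorial * p.factorial
          * ((m + 1) * weightedExpPartialSum m (p + 1)) := by
      refine mul_lt_mul_of_pos_left ?_ hfac
      linarith
    _ = _ := by ring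

theorem epsilon_coefficient_not_constant (n m : ℕ) (hn : 3 ≤ n) (hm : 1 ≤ m) :
    ∃ k k' : ℕ,
      (k.factorial : ℝ) * (k+m+n-1).factorial
          / ((k+m).factorial * (k+n-1).factorial * oneFOne (n-1) (1 - (k:ℝ) - n) m)
        ≠ (k'.factorial : ℝ) * (k'+m+n-1).factorial
          / ((k'+m).factorial * (k'+n-1).factorial * oneFOne (n-1) (1 - (k':ℝ) - n) m) :=
  ⟨1, 0, (epsilonCoefficient_one_lt_zero hn hm).ne⟩
end
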